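/- arXiv:1912.08658 — 5 statements merged into one kernel-verified Lean document; each statement's English description precedes it below -/
import Mathlib

section
/- Let λ ∈ ℂ \ [−1,1] and m, n ∈ ℕ. Let A be the (m+n)×(m+n) matrix with blocks A₁₁ = −T_m[g], A₂₂ = −T_n[g], A₁₂ = A₂₁ᵀ = 𝔤₁𝔤₂ᵀ (the rank-one matrix with entries (𝔤₁)_i(𝔤₂)_j). Then det(λI − A) = det T_m[φ] · det T_n[φ] · (1 − ⟨T_m[φ]⁻¹𝔤₁, 𝔤₁⟩ · ⟨T_n[φ]⁻¹𝔤₂, 𝔤₂⟩). -/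
/-!
In block form `λ − A` has rank-one off-diagonal blocks, so the Schur complement of `T_m[φ]` is
`T_n[φ]` minus a rank-one matrix and the matrix determinant lemma gives the formula. The real
content is the invertibility of `T_m[φ]`. Since `g(e^{iθ})` is the sign of `cos θ`, for the
trigonometric polynomial `p(θ) = Σ x_k e^{-ikθ}` one has
`2π ⟨x̄, T_m[g] x⟩ = ∫_{-π/2}^{π/2} |p|² − ∫_{π/2}^{3π/2} |p|²`, while `2π ⟨x̄, x⟩` is the sum
of the two integrals. So the numerical range of `T_m[g]` lies in `[−1, 1]`, and no `λ` outside it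
can make `λ + T_m[g]` singular.
-/

open scoped Matrix

/-- Fourier coefficients of the symbol `g`: `g l = 0` for even `l`,
    `g l = (−1)^((l−1)/2) · 2/(lπ)` for odd `l`. -/
noncomputable def gcoef (l : ℤ) : ℂ :=
  if Even l then 0 else ((-1 : ℝ) ^ ((l - 1) / 2) * 2 / (l * Real.pi) : ℝ)

/-- The Toeplitz matrix `T_m[φ] = λ I + T_m[g]` of the symbol `φ = g + λ`. -/
noncomputable def Tphi (lam : ℂ) (m : ℕ) : Matrix (Fin m) (Fin m) ℂ :=
  Matrix.of fun j k => (if j = k then lam else 0) + gcoef ((j : ℤ) - (k : ℤ))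

/-- The vector `𝔤₁ = (g_{−m}, g_{−m+1}, …, g_{−1})ᵀ ∈ ℂ^m`. -/
noncomputable def gvec1 (m : ℕ) : Fin m → ℂ := fun j => gcoef ((j : ℤ) - (m : ℤ))

/-- The vector `𝔤₂ = (g_{−1}, g_{−2}, …, g_{−n})ᵀ ∈ ℂ^n`. -/
noncomputable def gvec2 (n : ℕ) : Fin n → ℂ := fun j => gcoef (-(j : ℤ) - 1)

/-- The bilinear pairing `⟨a, b⟩ = Σ_j a_j b_j`. -/
noncomputable def pairing {m : ℕ} (a b : Fin m → ℂ) : ℂ := ∑ j, a j * b j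

/-- The matrix `A` with blocks `A₁₁ = −T_m[g]`, `A₂₂ = −T_n[g]`,
    `A₁₂ = A₂₁ᵀ = 𝔤₁𝔤₂ᵀ`. (Here `−T_m[g] = −(T_m[φ] − λ I)`.) -/
noncomputable def Amat (m n : ℕ) : Matrix (Fin m ⊕ Fin n) (Fin m ⊕ Fin n) ℂ :=
  Matrix.fromBlocks
    (-(Tphi 0 m)) (Matrix.vecMulVec (gvec1 m) (gvec2 n))
    (Matrix.vecMulVec (gvec2 n) (gvec1 m)) (-(Tphi 0 n))

namespace Matrix

variable {α m n : Type*} [CommRing α] [Fintype m] [DecidableEq m] [Fintype n] [DecidableEq n]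

theorem det_add_vecMulVec {A : Matrix m m α} (hA : IsUnit A.det) (u v : m → α) :
    (A + vecMulVec u v).det = A.det * (1 + v ⬝ᵥ (A⁻¹ *ᵥ u)) := by
  have hfactor : A + vecMulVec u v = A * (1 + vecMulVec (A⁻¹ *ᵥ u) v) := by
    rw [Matrix.mul_add, Matrix.mul_one, mul_vecMulVec, mulVec_mulVec, mul_nonsing_inv _ hA,
      one_mulVec]
  rw [hfactor, det_mul, vecMulVec_eq Unit, det_one_add_replicateCol_mul_replicateRow]

theorem det_fromBlocks_vecMulVec {A : Matrix m m α} {D : Matrix n n α} (hA : IsUnit A.det)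
    (hD : IsUnit D.det) (u z : m → α) (v w : n → α) :
    (fromBlocks A (vecMulVec u v) (vecMulVec w z) D).det
      = A.det * D.det * (1 - (z ⬝ᵥ (A⁻¹ *ᵥ u)) * (v ⬝ᵥ (D⁻¹ *ᵥ w))) := by
  have := A.invertibleOfIsUnitDet hA
  rw [det_fromBlocks₁₁, invOf_eq_nonsing_inv, Matrix.mul_assoc, mul_vecMulVec,
    vecMulVec_mul_vecMulVec, sub_eq_add_neg, ← vecMulVec_neg, det_add_vecMulVec hD,
    neg_dotProduct, smul_dotProduct, smul_eq_mul]
  ring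

open scoped ComplexOrder in
theorem det_smul_one_add_ne_zero {M : Matrix n n ℂ}
    (hM : ∀ x, ∃ r ∈ Set.Icc (-1 : ℝ) 1, star x ⬝ᵥ (M *ᵥ x) = r * (star x ⬝ᵥ x))
    {lam : ℂ} (hlam : lam ∉ Complex.ofReal '' Set.Icc (-1) 1) : (lam • 1 + M).det ≠ 0 := by
  intro hdet
  obtain ⟨v, hv, hker⟩ := Matrix.exists_mulVec_eq_zero_iff.mpr hdet
  obtain ⟨r, hr, hrv⟩ := hM v
  have hMv : M *ᵥ v = -lam • v := by
    rw [Matrix.add_mulVec, Matrix.smul_mulVec, Matrix.one_mulVec] at hker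
    rw [neg_smul]
    exact eq_neg_of_add_eq_zero_right hker
  rw [hMv, dotProduct_smul, smul_eq_mul] at hrv
  have hlam_eq : -lam = r := mul_right_cancel₀ (dotProduct_star_self_eq_zero.not.mpr hv) hrv
  exact hlam ⟨-r, ⟨by linarith [hr.2], by linarith [hr.1]⟩, by push_cast; rw [← hlam_eq, neg_neg]⟩

end Matrix

open Real

theorem exists_mem_Icc_sub_eq_mul_add {a b : ℝ} (ha : 0 ≤ a) (hb : 0 ≤ b) :
    ∃ r ∈ Set.Icc (-1 : ℝ) 1, a - b = r * (a + b) := by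
  rcases (add_nonneg ha hb).eq_or_lt with h | h
  · exact ⟨0, by norm_num, by linarith⟩
  · refine ⟨(a - b) / (a + b), ⟨?_, ?_⟩, by field_simp⟩
    · rw [le_div_iff₀ h]; linarith
    · rw [div_le_one h]; linarith

theorem Complex.I_zpow_two_mul (k : ℤ) : Complex.I ^ (2 * k) = (-1) ^ k := by
  rw [zpow_mul, zpow_two, Complex.I_mul_I]

noncomputable def fourierExp (l : ℤ) (θ : ℝ) : ℂ := Complex.exp (l * θ * Complex.I)

theorem continuous_fourierExp (l : ℤ) : Continuous (fourierExp l) := by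
  unfold fourierExp; fun_prop

theorem fourierExp_zero : fourierExp 0 = 1 := by
  ext θ; simp [fourierExp]

theorem fourierExp_add (j k : ℤ) (θ : ℝ) :
    fourierExp (j + k) θ = fourierExp j θ * fourierExp k θ := by
  rw [fourierExp, fourierExp, fourierExp, ← Complex.exp_add]
  push_cast
  ring_nf

theorem star_fourierExp (l : ℤ) (θ : ℝ) : star (fourierExp l θ) = fourierExp (-l) θ := by
  rw [fourierExp, fourierExp, Complex.star_def, ← Complex.exp_conj]
  simp

theorem fourierExp_add_two_pi (l : ℤ) (θ : ℝ) : fourierExp l (θ + 2 * π) = fourierExp l θ := by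
  rw [fourierExp, fourierExp, ← mul_one (Complex.exp (l * θ * Complex.I)),
    ← Complex.exp_int_mul_two_pi_mul_I l, ← Complex.exp_add]
  push_cast
  ring_nf

theorem fourierExp_int_mul_pi_div_two (l k : ℤ) :
    fourierExp l (k * (π / 2)) = Complex.I ^ (l * k) := by
  rw [fourierExp, show (l : ℂ) * ((k * (π / 2) : ℝ) : ℂ) * Complex.I
      = ((l * k : ℤ) : ℂ) * (π / 2 * Complex.I) by push_cast; ring,
    Complex.exp_int_mul, Complex.exp_pi_div_two_mul_I]

theorem integral_fourierExp_of_ne_zero {l : ℤ} (hl : l ≠ 0) (a b : ℝ) :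
    ∫ θ in a..b, fourierExp l θ = (fourierExp l b - fourierExp l a) / (l * Complex.I) := by
  have hc : (l * Complex.I : ℂ) ≠ 0 := by simp [hl]
  simp only [fourierExp, mul_right_comm _ _ Complex.I]
  exact integral_exp_mul_complex hc

theorem integral_fourierExp_period (l : ℤ) (a : ℝ) :
    ∫ θ in a..a + 2 * π, fourierExp l θ = if l = 0 then (2 * π : ℂ) else 0 := by
  split_ifs with hl
  · simp [hl, fourierExp_zero]
  · rw [integral_fourierExp_of_ne_zero hl, fourierExp_add_two_pi, sub_self, zero_div]

def toeplitz {R : Type*} (c : ℤ → R) (m : ℕ) : Matrix (Fin m) (Fin m) R :=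
  Matrix.of fun j k => c (j - k)

theorem toeplitz_integral_fourierExp_period (m : ℕ) (a : ℝ) :
    toeplitz (fun l => ∫ θ in a..a + 2 * π, fourierExp l θ) m = (2 * π : ℂ) • 1 := by
  ext j k
  simp [toeplitz, integral_fourierExp_period, Matrix.one_apply, sub_eq_zero, Fin.ext_iff]

noncomputable def trigPoly {m : ℕ} (x : Fin m → ℂ) (θ : ℝ) : ℂ :=
  ∑ k, x k * fourierExp (-k) θ

theorem normSq_trigPoly {m : ℕ} (x : Fin m → ℂ) (θ : ℝ) :
    (Complex.normSq (trigPoly x θ) : ℂ)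
      = ∑ j, ∑ k, star (x j) * x k * fourierExp (j - k) θ := by
  rw [Complex.normSq_eq_conj_mul_self, trigPoly, map_sum, Finset.sum_mul_sum]
  refine Finset.sum_congr rfl fun j _ => Finset.sum_congr rfl fun k _ => ?_
  rw [map_mul, ← Complex.star_def, star_fourierExp, neg_neg, sub_eq_add_neg,
    fourierExp_add]
  ring

theorem star_dotProduct_toeplitz_integral_mulVec {m : ℕ} (x : Fin m → ℂ) (a b : ℝ) :
    star x ⬝ᵥ (toeplitz (fun l => ∫ θ in a..b, fourierExp l θ) m *ᵥ x)
      = ((∫ θ in a..b, Complex.normSq (trigPoly x θ) : ℝ) : ℂ) := by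
  have hcont : ∀ l : ℤ, ∀ c : ℂ, Continuous fun θ => c * fourierExp l θ :=
    fun l c => continuous_const.mul (continuous_fourierExp l)
  rw [← intervalIntegral.integral_ofReal]
  simp_rw [normSq_trigPoly]
  rw [intervalIntegral.integral_finsetSum fun j _ => ?_]
  · refine Finset.sum_congr rfl fun j _ => ?_
    rw [intervalIntegral.integral_finsetSum fun k _ => (hcont _ _).intervalIntegrable a b,
      Matrix.mulVec, dotProduct, Finset.mul_sum]
    refine Finset.sum_congr rfl fun k _ => ?_
    rw [intervalIntegral.integral_const_mul, toeplitz, Matrix.of_apply, Pi.star_apply]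
    ring
  · exact (continuous_finsetSum _ fun k _ => hcont _ _).intervalIntegrable a b

theorem integral_fourierExp_sub (l : ℤ) :
    (∫ θ in -(π / 2)..π / 2, fourierExp l θ) - ∫ θ in π / 2..3 * π / 2, fourierExp l θ
      = 2 * π * gcoef l := by
  rcases eq_or_ne l 0 with rfl | hl
  · simp [fourierExp_zero, gcoef]
    ring
  have hI : Complex.I ^ (-l) = (-1) ^ l * Complex.I ^ l := by
    rw [show -l = 2 * -l + l by ring, zpow_add₀ Complex.I_ne_zero, Complex.I_zpow_two_mul]
    rcases Int.even_or_odd l with h | h <;> rw [h.neg.neg_one_zpow, h.neg_one_zpow]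
  have e₁ : fourierExp l (-(π / 2)) = (-1) ^ l * Complex.I ^ l := by
    simpa [hI] using fourierExp_int_mul_pi_div_two l (-1)
  have e₂ : fourierExp l (π / 2) = Complex.I ^ l := by
    simpa using fourierExp_int_mul_pi_div_two l 1
  have e₃ : fourierExp l (3 * π / 2) = (-1) ^ l * Complex.I ^ l := by
    rw [show 3 * π / 2 = ((3 : ℤ) : ℝ) * (π / 2) by push_cast; ring,
      fourierExp_int_mul_pi_div_two, show l * 3 = 2 * (2 * l) + -l by ring,
      zpow_add₀ Complex.I_ne_zero, Complex.I_zpow_two_mul, (even_two_mul l).neg_one_zpow,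
      one_mul, hI]
  rw [integral_fourierExp_of_ne_zero hl, integral_fourierExp_of_ne_zero hl, e₁, e₂, e₃]
  rcases Int.even_or_odd' l with ⟨k, rfl | rfl⟩
  · simp [gcoef, (even_two_mul k).neg_one_zpow]
  · have hodd : Odd (2 * k + 1) := odd_two_mul_add_one k
    have hIl : Complex.I ^ (2 * k + 1) = (-1) ^ k * Complex.I := by
      rw [zpow_add₀ Complex.I_ne_zero, Complex.I_zpow_two_mul, zpow_one]
    rw [gcoef, if_neg (Int.not_even_iff_odd.mpr hodd), hodd.neg_one_zpow, hIl,
      show (2 * k + 1 - 1) / 2 = k by omega]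
    have hl' : ((2 * k + 1 : ℤ) : ℂ) ≠ 0 := by exact_mod_cast hl
    push_cast at hl' ⊢
    field_simp
    ring

theorem smul_toeplitz_gcoef (m : ℕ) :
    (2 * π : ℂ) • toeplitz gcoef m
      = toeplitz (fun l => ∫ θ in -(π / 2)..π / 2, fourierExp l θ) m
        - toeplitz (fun l => ∫ θ in π / 2..3 * π / 2, fourierExp l θ) m := by
  ext j k
  simp [toeplitz, integral_fourierExp_sub]

theorem exists_mem_Icc_star_dotProduct_toeplitz_gcoef {m : ℕ} (x : Fin m → ℂ) :
    ∃ r ∈ Set.Icc (-1 : ℝ) 1, star x ⬝ᵥ (toeplitz gcoef m *ᵥ x) = r * (star x ⬝ᵥ x) := by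
  set I₁ := ∫ θ in -(π / 2)..π / 2, Complex.normSq (trigPoly x θ)
  set I₂ := ∫ θ in π / 2..3 * π / 2, Complex.normSq (trigPoly x θ)
  have hI₁ : 0 ≤ I₁ := intervalIntegral.integral_nonneg (by linarith [pi_pos])
    fun _ _ => Complex.normSq_nonneg _
  have hI₂ : 0 ≤ I₂ := intervalIntegral.integral_nonneg (by linarith [pi_pos])
    fun _ _ => Complex.normSq_nonneg _
  have hdiff : (2 * π : ℂ) * (star x ⬝ᵥ (toeplitz gcoef m *ᵥ x)) = ((I₁ - I₂ : ℝ) : ℂ) := by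
    rw [← smul_eq_mul, ← dotProduct_smul, ← Matrix.smul_mulVec, smul_toeplitz_gcoef,
      Matrix.sub_mulVec, dotProduct_sub, star_dotProduct_toeplitz_integral_mulVec,
      star_dotProduct_toeplitz_integral_mulVec, Complex.ofReal_sub]
  have hsum : (2 * π : ℂ) * (star x ⬝ᵥ x) = ((I₁ + I₂ : ℝ) : ℂ) := by
    have hcont : Continuous fun θ => Complex.normSq (trigPoly x θ) := by
      unfold trigPoly fourierExp
      fun_prop
    rw [intervalIntegral.integral_add_adjacent_intervals (hcont.intervalIntegrable _ _)
      (hcont.intervalIntegrable _ _), show 3 * π / 2 = -(π / 2) + 2 * π by ring,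
      ← star_dotProduct_toeplitz_integral_mulVec, toeplitz_integral_fourierExp_period,
      Matrix.smul_mulVec, Matrix.one_mulVec, dotProduct_smul, smul_eq_mul]
  obtain ⟨r, hr, hr_eq⟩ := exists_mem_Icc_sub_eq_mul_add hI₁ hI₂
  refine ⟨r, hr, mul_left_cancel₀ (by simp [pi_ne_zero] : (2 * π : ℂ) ≠ 0) ?_⟩
  rw [hdiff, mul_left_comm, hsum, hr_eq]
  push_cast
  ring

theorem Tphi_eq_smul_one_add_toeplitz (lam : ℂ) (m : ℕ) :
    Tphi lam m = lam • 1 + toeplitz gcoef m := by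
  ext j k
  simp [Tphi, toeplitz, Matrix.one_apply]

theorem isUnit_det_Tphi {lam : ℂ} (hlam : lam ∉ Complex.ofReal '' Set.Icc (-1 : ℝ) 1) (m : ℕ) :
    IsUnit (Tphi lam m).det := by
  rw [isUnit_iff_ne_zero, Tphi_eq_smul_one_add_toeplitz]
  exact Matrix.det_smul_one_add_ne_zero exists_mem_Icc_star_dotProduct_toeplitz_gcoef hlam

theorem pairing_eq_dotProduct {m : ℕ} (a b : Fin m → ℂ) : pairing a b = a ⬝ᵥ b := rfl

theorem smul_one_sub_Amat (lam : ℂ) (m n : ℕ) :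
    lam • 1 - Amat m n
      = Matrix.fromBlocks (Tphi lam m) (Matrix.vecMulVec (gvec1 m) (-gvec2 n))
          (Matrix.vecMulVec (gvec2 n) (-gvec1 m)) (Tphi lam n) := by
  rw [Amat, ← Matrix.fromBlocks_one, Matrix.fromBlocks_smul, sub_eq_add_neg,
    Matrix.fromBlocks_neg, Matrix.fromBlocks_add]
  simp [Tphi_eq_smul_one_add_toeplitz]

/-- for `λ ∈ ℂ \ [−1,1]`,
    `det(λI − A) = det T_m[φ] · det T_n[φ] ·
      (1 − ⟨T_m[φ]⁻¹𝔤₁, 𝔤₁⟩ · ⟨T_n[φ]⁻¹𝔤₂, 𝔤₂⟩)`. -/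
theorem det_two_block (lam : ℂ) (hlam : lam ∉ (Complex.ofReal '' Set.Icc (-1 : ℝ) 1))
    (m n : ℕ) :
    (lam • (1 : Matrix (Fin m ⊕ Fin n) (Fin m ⊕ Fin n) ℂ) - Amat m n).det
      = (Tphi lam m).det * (Tphi lam n).det *
        (1 - pairing ((Tphi lam m)⁻¹ *ᵥ gvec1 m) (gvec1 m) *
             pairing ((Tphi lam n)⁻¹ *ᵥ gvec2 n) (gvec2 n)) := by
  rw [smul_one_sub_Amat, Matrix.det_fromBlocks_vecMulVec (isUnit_det_Tphi hlam m)
    (isUnit_det_Tphi hlam n)]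
  rw [pairing_eq_dotProduct, pairing_eq_dotProduct, neg_dotProduct, neg_dotProduct,
    dotProduct_comm (gvec1 m), dotProduct_comm (gvec2 n)]
  ring
end

section
/- There exist constants C > 0 and m₀ ∈ ℕ such that for all m ≥ m₀ and all real t with |t| ≤ 1 − 1/√m, |f̃_{m,1}(it)| ≤ C·e^{−√m/2}/√m. -/
/-!
On the imaginary axis the integrand of `f̃_{m,1}(it)` is `(ist)^n / (1 - s²t²)` with
`n = 2M + 2 ≥ m - 1`, and `1 - s²t² ≥ 1 - |t|`, so `|f̃_{m,1}(it)| ≤ |t|^m / (1 - |t|)`.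
For `|t| ≤ 1 - 1/√m` this is at most `√m (1 - 1/√m)^m ≤ √m e^{-√m}`, and `x² ≤ 16 e^{x/2}` turns `x e^{-x}` into `16 e^{-x/2} / x`.
-/

noncomputable def ftilde (m : ℕ) (z : ℂ) : ℂ :=
  (-1 : ℂ) ^ ((m - 1) / 2) * z *
    ∫ t in (0 : ℝ)..1, ((t : ℂ) * z) ^ (2 * ((m - 1) / 2) + 2) / (1 + ((t : ℂ) * z) ^ 2)

open Complex

theorem norm_I_mul_pow_div_one_add_sq_le (n : ℕ) {u : ℝ} (hu : |u| < 1) :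
    ‖(I * u) ^ n / (1 + (I * u) ^ 2)‖ ≤ |u| ^ n / (1 - |u|) := by
  have hden : 1 + (I * u) ^ 2 = ((1 - u ^ 2 : ℝ) : ℂ) := by
    push_cast
    rw [mul_pow, I_sq]
    ring
  have hsq : u ^ 2 ≤ |u| := by
    rw [← sq_abs, sq]
    exact mul_le_of_le_one_left (abs_nonneg u) hu.le
  rw [norm_div, hden, norm_pow, norm_mul, norm_I, one_mul, norm_real, norm_real,
    Real.norm_eq_abs, Real.norm_eq_abs, abs_of_pos (show 0 < 1 - u ^ 2 by linarith)]
  gcongr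

theorem norm_ftilde_I_mul_le (m : ℕ) {t : ℝ} (ht : |t| < 1) :
    ‖ftilde m (I * t)‖ ≤ |t| ^ (2 * ((m - 1) / 2) + 3) / (1 - |t|) := by
  set n := 2 * ((m - 1) / 2) + 2
  have hintegrand : ∀ s ∈ Set.uIoc (0 : ℝ) 1,
      ‖((s : ℂ) * (I * t)) ^ n / (1 + ((s : ℂ) * (I * t)) ^ 2)‖ ≤ |t| ^ n / (1 - |t|) := by
    intro s hs
    rw [Set.uIoc_of_le zero_le_one] at hs
    have hst : |s * t| ≤ |t| := by
      rw [abs_mul, abs_of_pos hs.1]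
      exact mul_le_of_le_one_left (abs_nonneg t) hs.2
    rw [show (s : ℂ) * (I * t) = I * ↑(s * t) by push_cast; ring]
    refine (norm_I_mul_pow_div_one_add_sq_le n (hst.trans_lt ht)).trans ?_
    gcongr
  have hint := intervalIntegral.norm_integral_le_of_norm_le_const hintegrand
  rw [sub_zero, abs_one, mul_one] at hint
  rw [ftilde, norm_mul, norm_mul, norm_pow, norm_neg, norm_one, one_pow, one_mul, norm_mul,
    norm_I, one_mul, norm_real, Real.norm_eq_abs]
  calc |t| * _ ≤ |t| * (|t| ^ n / (1 - |t|)) := by gcongr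
    _ = |t| ^ (n + 1) / (1 - |t|) := by ring

theorem sq_le_sixteen_mul_exp_half {x : ℝ} (hx : 0 ≤ x) : x ^ 2 ≤ 16 * Real.exp (x / 2) := by
  have hquarter : x / 4 ≤ Real.exp (x / 4) := by linarith [Real.add_one_le_exp (x / 4)]
  calc x ^ 2 = 16 * (x / 4) ^ 2 := by ring
    _ ≤ 16 * Real.exp (x / 4) ^ 2 := by gcongr
    _ = 16 * Real.exp (x / 2) := by rw [← Real.exp_nat_mul]; ring_nf

theorem mul_exp_neg_le_div {x : ℝ} (hx : 0 < x) :
    x * Real.exp (-x) ≤ 16 * Real.exp (-x / 2) / x := by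
  rw [le_div_iff₀ hx]
  have hsplit : Real.exp (-x) = Real.exp (-x / 2) ^ 2 := by
    rw [← Real.exp_nat_mul]; congr 1; push_cast; ring
  have hcancel : Real.exp (x / 2) * Real.exp (-x / 2) = 1 := by
    rw [← Real.exp_add, ← Real.exp_zero]; congr 1; ring
  calc x * Real.exp (-x) * x = x ^ 2 * Real.exp (-x / 2) ^ 2 := by
        rw [hsplit]; ring
    _ ≤ 16 * Real.exp (x / 2) * Real.exp (-x / 2) ^ 2 := by
        gcongr; exact sq_le_sixteen_mul_exp_half hx.le
    _ = 16 * Real.exp (-x / 2) := by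
        linear_combination 16 * Real.exp (-x / 2) * hcancel

/-- `|f̃_{m,1}(it)| ≤ C·e^{−√m/2}/√m` for large `m`, uniformly in
    `|t| ≤ 1 − 1/√m`. -/
theorem ftilde_inner_bound :
    ∃ C : ℝ, 0 < C ∧ ∃ m₀ : ℕ, ∀ m : ℕ, m₀ ≤ m → ∀ t : ℝ,
      |t| ≤ 1 - 1 / Real.sqrt m →
      ‖ftilde m (Complex.I * (t : ℂ))‖
        ≤ C * Real.exp (-Real.sqrt m / 2) / Real.sqrt m := by
  refine ⟨16, by norm_num, 1, fun m hm t ht => ?_⟩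
  set x := Real.sqrt m with hx
  have hm : (1 : ℝ) ≤ m := by exact_mod_cast hm
  have hx1 : 1 ≤ x := Real.one_le_sqrt.mpr hm
  have hx0 : 0 < x := one_pos.trans_le hx1
  have hmx : (m : ℝ) = x ^ 2 := by rw [hx, Real.sq_sqrt (by positivity)]
  have hgap : 1 / x ≤ 1 - |t| := by linarith
  have ht1 : |t| < 1 := by linarith [one_div_pos.mpr hx0]
  calc ‖ftilde m (I * t)‖ ≤ |t| ^ (2 * ((m - 1) / 2) + 3) / (1 - |t|) :=
        norm_ftilde_I_mul_le m ht1
    _ ≤ |t| ^ m / (1 / x) :=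
        div_le_div₀ (by positivity) (pow_le_pow_of_le_one (abs_nonneg t) ht1.le (by omega))
          (one_div_pos.mpr hx0) hgap
    _ ≤ (1 - 1 / x) ^ m / (1 / x) := by gcongr
    _ = x * (1 - x / m) ^ m := by
        rw [show x / m = 1 / x by rw [hmx]; field_simp]; field_simp
    _ ≤ x * Real.exp (-x) := by
        gcongr
        exact Real.one_sub_div_pow_le_exp_neg (by rw [hmx]; nlinarith)
    _ ≤ 16 * Real.exp (-x / 2) / x := mul_exp_neg_le_div hx0
end

section
/- There exist constants C > 0 and m₀ ∈ ℕ such that for all m ≥ m₀ and all real t with 1 − 1/√m ≤ t ≤ 1 − 1/m, one has |f̃_{m,1}(it) − (1/(2i)) ∫_{m(1−t)}^{∞} (e^{−ζ}/ζ) dζ| ≤ C·(ln m)/m; in particular |f̃_{m,1}(it)| ≤ C and |f̃_{m,1}(−it)| ≤ C for all such m and t. -/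
/-!
On the imaginary axis `f̃_{m,1}(it) = -i ∫₀ᵗ yⁿ/(1-y²) dy` with `n = 2M+2 ∈ {m, m+1}`, and
`f̃_{m,1}` is odd. Write `1/(1-y²) = (1/(1-y) + 1/(1+y))/2`; the `1/(1+y)` part is at most
`1/(n+1)`. In the `1/(1-y)` part, with `u = 1-y`, replace `(1-u)ⁿ` by `e^{-mu}`: Bernoulli's
inequality bounds the error by `u(1+nu)e^{-mu}`, whose quotient by `u` integrates to `O(1/m)`.
The substitution `ζ = mu` turns `∫ e^{-mu}/u` into `E₁(m(1-t)) - E₁(m)`, and `E₁(m) ≤ e^{-m}/m`.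
This gives the bound `2/m`, uniformly in `0 ≤ t < 1`, and `E₁ ≤ 1` on `[1, ∞)` gives boundedness.
-/

open MeasureTheory

lemma ftilde_neg (m : ℕ) (z : ℂ) : ftilde m (-z) = -ftilde m z := by
  have heven : Even (2 * ((m - 1) / 2) + 2) := ⟨(m - 1) / 2 + 1, by ring⟩
  simp only [ftilde, mul_neg, heven.neg_pow, neg_sq]
  ring

open Complex in
lemma ftilde_I_mul (m : ℕ) (t : ℝ) :
    ftilde m (I * t) =
      -I * ((∫ y in (0 : ℝ)..t, y ^ (2 * ((m - 1) / 2) + 2) / (1 - y ^ 2) : ℝ) : ℂ) := by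
  rw [ftilde]
  generalize (m - 1) / 2 = M
  have hI : I ^ (2 * M + 2) = (-1) ^ (M + 1) := by rw [← mul_add_one, pow_mul, I_sq]
  have hpt : ∀ s : ℝ, ((s : ℂ) * (I * t)) ^ (2 * M + 2) / (1 + ((s : ℂ) * (I * t)) ^ 2)
      = (-1) ^ (M + 1) * (((s * t) ^ (2 * M + 2) / (1 - (s * t) ^ 2) : ℝ) : ℂ) := by
    intro s
    rw [show (s : ℂ) * (I * t) = I * (s * t : ℝ) by push_cast; ring, mul_pow, mul_pow, hI, I_sq]
    push_cast
    ring
  have hsubst := intervalIntegral.smul_integral_comp_mul_right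
    (fun y : ℝ => y ^ (2 * M + 2) / (1 - y ^ 2)) (a := 0) (b := 1) t
  simp only [zero_mul, one_mul, smul_eq_mul] at hsubst
  rw [intervalIntegral.integral_congr (fun s _ => hpt s),
    intervalIntegral.integral_const_mul, intervalIntegral.integral_ofReal, ← hsubst]
  have hsign : (-1 : ℂ) ^ M * (-1) ^ (M + 1) = -1 := by
    rw [← pow_add, show M + (M + 1) = 2 * M + 1 by ring, pow_succ, pow_mul]; norm_num
  set X := ∫ s in (0 : ℝ)..1, (s * t) ^ (2 * M + 2) / (1 - (s * t) ^ 2)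
  push_cast
  linear_combination (I * t * (X : ℂ)) * hsign

open Complex in
lemma norm_ftilde_I_mul (m : ℕ) (t : ℝ) :
    ‖ftilde m (I * t)‖ = |∫ y in (0 : ℝ)..t, y ^ (2 * ((m - 1) / 2) + 2) / (1 - y ^ 2)| := by
  rw [ftilde_I_mul, norm_mul, norm_neg, norm_I, one_mul, norm_real, Real.norm_eq_abs]

open Complex in
lemma norm_ftilde_I_mul_sub (m : ℕ) (t x : ℝ) :
    ‖ftilde m (I * t) - 1 / (2 * I) * x‖
      = |(∫ y in (0 : ℝ)..t, y ^ (2 * ((m - 1) / 2) + 2) / (1 - y ^ 2)) - x / 2| := by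
  have hI : (1 : ℂ) / (2 * I) = -I / 2 := by
    rw [div_eq_div_iff (by simp) two_ne_zero]
    ring_nf
    rw [I_sq]
    ring
  set A := ∫ y in (0 : ℝ)..t, y ^ (2 * ((m - 1) / 2) + 2) / (1 - y ^ 2)
  rw [ftilde_I_mul, hI, show -I * (A : ℂ) - -I / 2 * x = -I * ((A - x / 2 : ℝ) : ℂ) by
    push_cast; ring, norm_mul, norm_neg, norm_I, one_mul, norm_real, Real.norm_eq_abs]

open Real Set

noncomputable def expIntegralE₁ (x : ℝ) : ℝ := ∫ ζ in Ioi x, exp (-ζ) / ζ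

lemma integrableOn_exp_neg_div_Ioi {a : ℝ} (ha : 0 < a) :
    IntegrableOn (fun ζ => exp (-ζ) / ζ) (Ioi a) := by
  refine ((integrableOn_exp_neg_Ioi a).div_const a).mono'
    (by fun_prop : Measurable fun ζ : ℝ => exp (-ζ) / ζ).aestronglyMeasurable
    ((ae_restrict_iff' measurableSet_Ioi).mpr (ae_of_all _ fun ζ hζ => ?_))
  rw [norm_of_nonneg (div_nonneg (exp_pos _).le (ha.trans hζ).le)]
  gcongr
  exact hζ.le

lemma expIntegralE₁_nonneg {a : ℝ} (ha : 0 ≤ a) : 0 ≤ expIntegralE₁ a :=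
  setIntegral_nonneg measurableSet_Ioi fun _ hζ => div_nonneg (exp_pos _).le (ha.trans hζ.le)

lemma expIntegralE₁_le {a : ℝ} (ha : 0 < a) : expIntegralE₁ a ≤ exp (-a) / a := by
  rw [← integral_exp_neg_Ioi, ← integral_div]
  refine setIntegral_mono_on (integrableOn_exp_neg_div_Ioi ha)
    ((integrableOn_exp_neg_Ioi a).div_const a)
    measurableSet_Ioi ?_
  intro ζ hζ
  gcongr
  exact hζ.le

lemma expIntegralE₁_le_one {a : ℝ} (ha : 1 ≤ a) : expIntegralE₁ a ≤ 1 :=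
  (expIntegralE₁_le (by linarith)).trans
    (div_le_one_of_le₀ ((exp_le_one_iff.mpr (by linarith)).trans ha) (by linarith))

lemma expIntegralE₁_eq_integral_add {a b : ℝ} (ha : 0 < a) (hab : a ≤ b) :
    expIntegralE₁ a = (∫ ζ in a..b, exp (-ζ) / ζ) + expIntegralE₁ b := by
  rw [intervalIntegral.integral_of_le hab, expIntegralE₁, expIntegralE₁,
    ← setIntegral_union (Ioc_disjoint_Ioi le_rfl) measurableSet_Ioi
      ((integrableOn_exp_neg_div_Ioi ha).mono_set Ioc_subset_Ioi_self)
      (integrableOn_exp_neg_div_Ioi (ha.trans_le hab)), Ioc_union_Ioi_eq_Ioi hab]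

lemma integral_exp_neg_mul_one_sub_div_one_sub {c : ℝ} (hc : c ≠ 0) (t : ℝ) :
    ∫ y in (0 : ℝ)..t, exp (-(c * (1 - y))) / (1 - y)
      = ∫ ζ in c * (1 - t)..c, exp (-ζ) / ζ := by
  have hpt : ∀ y : ℝ, exp (-(c * (1 - y))) / (1 - y)
      = c * (exp (-(c - c * y)) / (c - c * y)) := fun y => by
    rw [← mul_one_sub, mul_div_assoc', mul_div_mul_left _ _ hc]
  rw [intervalIntegral.integral_congr fun y _ => hpt y, intervalIntegral.integral_const_mul,
    intervalIntegral.integral_comp_sub_mul (fun ζ => exp (-ζ) / ζ) hc, smul_eq_mul,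
    mul_inv_cancel_left₀ hc, mul_zero, sub_zero, mul_one_sub]

lemma one_sub_pow_le_exp_neg_mul {u : ℝ} (hu : u ≤ 1) (n : ℕ) :
    (1 - u) ^ n ≤ exp (-(n * u)) := by
  rw [← mul_neg, exp_nat_mul]
  exact pow_le_pow_left₀ (by linarith) (one_sub_le_exp_neg u) n

lemma exp_neg_mul_mul_le_one_sub_pow {u : ℝ} (hu0 : 0 ≤ u) (hu1 : u ≤ 1) (n : ℕ) :
    exp (-(n * u)) * (1 - n * u ^ 2) ≤ (1 - u) ^ n := by
  have hbernoulli : 1 - n * u ^ 2 ≤ (1 - u ^ 2) ^ n := by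
    simpa [sub_eq_add_neg] using one_add_mul_le_pow (a := -u ^ 2) (by nlinarith) n
  have hbase : exp (-u) * (1 - u ^ 2) ≤ 1 - u :=
    calc exp (-u) * (1 - u ^ 2) = exp (-u) * ((1 - u) * (u + 1)) := by ring
      _ ≤ exp (-u) * ((1 - u) * exp u) :=
        mul_le_mul_of_nonneg_left (mul_le_mul_of_nonneg_left (add_one_le_exp u) (by linarith))
          (exp_pos _).le
      _ = 1 - u := by rw [exp_neg]; field_simp
  calc exp (-(n * u)) * (1 - n * u ^ 2) ≤ exp (-u) ^ n * (1 - u ^ 2) ^ n := by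
        rw [← exp_nat_mul, mul_neg]; gcongr
    _ = (exp (-u) * (1 - u ^ 2)) ^ n := (mul_pow _ _ _).symm
    _ ≤ (1 - u) ^ n := pow_le_pow_left₀ (mul_nonneg (exp_pos _).le (by nlinarith)) hbase n

lemma abs_one_sub_pow_sub_exp_neg_mul_le {m n : ℕ} (hmn : m ≤ n) (hnm : n ≤ m + 1) {u : ℝ}
    (hu0 : 0 ≤ u) (hu1 : u ≤ 1) :
    |(1 - u) ^ n - exp (-(m * u))| ≤ u * (1 + n * u) * exp (-(m * u)) := by
  have hmnR : (m : ℝ) ≤ n := by exact_mod_cast hmn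
  have hnmR : (n : ℝ) ≤ m + 1 := by exact_mod_cast hnm
  have hnm_exp : exp (-(n * u)) ≤ exp (-(m * u)) := exp_le_exp.mpr (by nlinarith)
  have hmn_exp : exp (-(m * u)) * (1 - u) ≤ exp (-(n * u)) :=
    calc exp (-(m * u)) * (1 - u) ≤ exp (-(m * u)) * exp (-u) := by
          gcongr; exact one_sub_le_exp_neg u
      _ = exp (-((m + 1) * u)) := by rw [← exp_add]; ring_nf
      _ ≤ exp (-(n * u)) := exp_le_exp.mpr (by nlinarith)
  have hlower := exp_neg_mul_mul_le_one_sub_pow hu0 hu1 n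
  rw [abs_of_nonpos (by linarith [one_sub_pow_le_exp_neg_mul hu1 n])]
  nlinarith [mul_nonneg (mul_nonneg (Nat.cast_nonneg n) (sq_nonneg u)) (sub_nonneg.mpr hnm_exp)]

lemma abs_pow_div_one_sub_sub_exp_div_le {m n : ℕ} (hmn : m ≤ n) (hnm : n ≤ m + 1) {y : ℝ}
    (hy0 : 0 ≤ y) (hy1 : y < 1) :
    |y ^ n / (1 - y) - exp (-(m * (1 - y))) / (1 - y)|
      ≤ (1 + n * (1 - y)) * exp (-(m * (1 - y))) := by
  have h := abs_one_sub_pow_sub_exp_neg_mul_le hmn hnm (u := 1 - y) (by linarith) (by linarith)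
  rw [sub_sub_cancel] at h
  rw [← sub_div, abs_div, abs_of_pos (by linarith : 0 < 1 - y), div_le_iff₀ (by linarith)]
  linarith

lemma intervalIntegrable_div_one_sub {f : ℝ → ℝ} (hf : Continuous f) {t : ℝ} (ht : t < 1) :
    IntervalIntegrable (fun y => f y / (1 - y)) volume 0 t := by
  refine (hf.continuousOn.div (by fun_prop) fun y hy => ?_).intervalIntegrable
  rcases mem_uIcc.mp hy with h | h <;> linarith [h.1, h.2]

lemma intervalIntegrable_div_one_add {f : ℝ → ℝ} (hf : Continuous f) {t : ℝ} (ht : -1 < t) :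
    IntervalIntegrable (fun y => f y / (1 + y)) volume 0 t := by
  refine (hf.continuousOn.div (by fun_prop) fun y hy => ?_).intervalIntegrable
  rcases mem_uIcc.mp hy with h | h <;> linarith [h.1, h.2]

lemma integral_one_add_mul_mul_exp_le {a c t : ℝ} (ha : 0 ≤ a) (hc : 0 < c) (ht0 : 0 ≤ t)
    (ht1 : t ≤ 1) :
    ∫ y in (0 : ℝ)..t, (1 + a * (1 - y)) * exp (-(c * (1 - y))) ≤ 1 / c + a / c ^ 2 := by
  set F : ℝ → ℝ := fun y => (1 / c + a * ((1 - y) / c + 1 / c ^ 2)) * exp (-(c * (1 - y)))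
  have hF : ∀ y, HasDerivAt F ((1 + a * (1 - y)) * exp (-(c * (1 - y)))) y := by
    intro y
    have hlin : HasDerivAt (fun y : ℝ => -(c * (1 - y))) c y := by
      have hfun : (fun y : ℝ => -(c * (1 - y))) = fun y => c * y - c := by ext; ring
      rw [hfun]
      simpa using ((hasDerivAt_id' y).const_mul c).sub_const c
    refine (((((hasDerivAt_id' y).const_sub 1).div_const c).add_const (1 / c ^ 2)).const_mul a
      |>.const_add (1 / c) |>.mul hlin.exp).congr_deriv ?_
    field_simp
    ring
  have hint : IntervalIntegrable (fun y => (1 + a * (1 - y)) * exp (-(c * (1 - y)))) volume 0 1 :=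
    Continuous.intervalIntegrable (by fun_prop) _ _
  have hnonneg :
      0 ≤ᵐ[volume.restrict (Ioc 0 1)] fun y => (1 + a * (1 - y)) * exp (-(c * (1 - y))) := by
    refine (ae_restrict_iff' measurableSet_Ioc).mpr (ae_of_all _ fun y hy => ?_)
    exact mul_nonneg (by nlinarith [hy.2]) (exp_pos _).le
  calc ∫ y in (0 : ℝ)..t, (1 + a * (1 - y)) * exp (-(c * (1 - y)))
      ≤ ∫ y in (0 : ℝ)..1, (1 + a * (1 - y)) * exp (-(c * (1 - y))) :=
        intervalIntegral.integral_mono_interval le_rfl ht0 ht1 hnonneg hint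
    _ = F 1 - F 0 := intervalIntegral.integral_eq_sub_of_hasDerivAt (fun y _ => hF y) hint
    _ ≤ 1 / c + a / c ^ 2 := by
        have : 0 ≤ F 0 := by positivity
        simp only [F, sub_self, sub_zero, mul_zero, neg_zero, exp_zero, mul_one, zero_div, zero_add,
          mul_one_div] at this ⊢
        linarith

lemma integral_pow_div_one_add_le {t : ℝ} (ht0 : 0 ≤ t) (ht1 : t ≤ 1) (n : ℕ) :
    ∫ y in (0 : ℝ)..t, y ^ n / (1 + y) ≤ 1 / (n + 1) :=
  calc ∫ y in (0 : ℝ)..t, y ^ n / (1 + y) ≤ ∫ y in (0 : ℝ)..t, y ^ n := by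
        refine intervalIntegral.integral_mono_on ht0
          (intervalIntegrable_div_one_add (continuous_pow n) (by linarith))
          ((continuous_pow n).intervalIntegrable _ _) fun y hy => ?_
        exact div_le_self (pow_nonneg hy.1 n) (by linarith [hy.1])
    _ = t ^ (n + 1) / (n + 1) := by simp [integral_pow]
    _ ≤ 1 / (n + 1) := by gcongr; exact pow_le_one₀ ht0 ht1

lemma integral_pow_div_one_sub_sq {t : ℝ} (ht0 : 0 ≤ t) (ht1 : t < 1) (n : ℕ) :
    ∫ y in (0 : ℝ)..t, y ^ n / (1 - y ^ 2)
      = (∫ y in (0 : ℝ)..t, y ^ n / (1 - y)) / 2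
        + (∫ y in (0 : ℝ)..t, y ^ n / (1 + y)) / 2 := by
  rw [← intervalIntegral.integral_div, ← intervalIntegral.integral_div,
    ← intervalIntegral.integral_add
      ((intervalIntegrable_div_one_sub (continuous_pow n) ht1).div_const 2)
      ((intervalIntegrable_div_one_add (continuous_pow n) (by linarith)).div_const 2)]
  refine intervalIntegral.integral_congr fun y hy => ?_
  rw [uIcc_of_le ht0] at hy
  have : 1 - y ≠ 0 := by linarith [hy.2]
  have : 1 + y ≠ 0 := by linarith [hy.1]
  rw [show (1 : ℝ) - y ^ 2 = (1 - y) * (1 + y) by ring]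
  field_simp
  ring

lemma abs_integral_pow_div_one_sub_sub_integral_exp_div_le {m n : ℕ} (hm : 0 < m) (hmn : m ≤ n)
    (hnm : n ≤ m + 1) {t : ℝ} (ht0 : 0 ≤ t) (ht1 : t < 1) :
    |(∫ y in (0 : ℝ)..t, y ^ n / (1 - y))
        - ∫ y in (0 : ℝ)..t, exp (-(m * (1 - y))) / (1 - y)| ≤ 1 / m + n / m ^ 2 := by
  rw [← intervalIntegral.integral_sub (intervalIntegrable_div_one_sub (continuous_pow n) ht1)
    (intervalIntegrable_div_one_sub (by fun_prop) ht1), ← Real.norm_eq_abs]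
  calc ‖∫ y in (0 : ℝ)..t, y ^ n / (1 - y) - exp (-(m * (1 - y))) / (1 - y)‖
      ≤ ∫ y in (0 : ℝ)..t, (1 + n * (1 - y)) * exp (-(m * (1 - y))) :=
        intervalIntegral.norm_integral_le_of_norm_le ht0
          (ae_of_all _ fun y h => abs_pow_div_one_sub_sub_exp_div_le hmn hnm h.1.le
            (h.2.trans_lt ht1))
          (Continuous.intervalIntegrable (by fun_prop :
            Continuous fun y : ℝ => (1 + n * (1 - y)) * exp (-(m * (1 - y)))) _ _)
    _ ≤ 1 / m + n / m ^ 2 :=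
        integral_one_add_mul_mul_exp_le (Nat.cast_nonneg n) (by exact_mod_cast hm) ht0 ht1.le

theorem abs_integral_pow_div_one_sub_sq_sub_half_expIntegralE₁_le {m n : ℕ} (hm : 0 < m)
    (hmn : m ≤ n) (hnm : n ≤ m + 1) {t : ℝ} (ht0 : 0 ≤ t) (ht1 : t < 1) :
    |(∫ y in (0 : ℝ)..t, y ^ n / (1 - y ^ 2)) - expIntegralE₁ (m * (1 - t)) / 2|
      ≤ 2 / m := by
  have hmR : (0 : ℝ) < m := by exact_mod_cast hm
  have hE : expIntegralE₁ (m * (1 - t))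
      = (∫ y in (0 : ℝ)..t, exp (-(m * (1 - y))) / (1 - y)) + expIntegralE₁ m := by
    rw [integral_exp_neg_mul_one_sub_div_one_sub hmR.ne', ← expIntegralE₁_eq_integral_add
      (mul_pos hmR (by linarith)) (mul_le_of_le_one_right hmR.le (by linarith))]
  obtain ⟨hPQ₁, hPQ₂⟩ :=
    abs_le.mp (abs_integral_pow_div_one_sub_sub_integral_exp_div_le hm hmn hnm ht0 ht1)
  have hB₀ : 0 ≤ ∫ y in (0 : ℝ)..t, y ^ n / (1 + y) :=
    intervalIntegral.integral_nonneg ht0 fun y h => by have := h.1; positivity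
  have hB₁ : ∫ y in (0 : ℝ)..t, y ^ n / (1 + y) ≤ 1 / m :=
    (integral_pow_div_one_add_le ht0 ht1.le n).trans
      (one_div_le_one_div_of_le hmR (by exact_mod_cast hmn.trans n.le_succ))
  have hR₀ : 0 ≤ expIntegralE₁ m := expIntegralE₁_nonneg hmR.le
  have hR₁ : expIntegralE₁ m ≤ 1 / m :=
    (expIntegralE₁_le hmR).trans (by gcongr; exact exp_le_one_iff.mpr (by linarith))
  have hn : (n : ℝ) / m ^ 2 ≤ 2 * (1 / m) := by
    rw [mul_one_div, div_le_div_iff₀ (by positivity) hmR]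
    have : (n : ℝ) ≤ m + 1 := by exact_mod_cast hnm
    have : (1 : ℝ) ≤ m := by exact_mod_cast hm
    nlinarith
  rw [integral_pow_div_one_sub_sq ht0 ht1, hE, abs_le, show (2 : ℝ) / m = 2 * (1 / m) by ring]
  constructor <;> linarith

/-- for large `m`, uniformly in `1 − 1/√m ≤ t ≤ 1 − 1/m`,
    `f̃_{m,1}(it) = (1/(2i)) ∫_{m(1−t)}^∞ (e^{−ζ}/ζ) dζ + O((ln m)/m)`; in
    particular `f̃_{m,1}(±it)` is bounded there. -/
theorem ftilde_intermediate_bound :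
    ∃ C : ℝ, 0 < C ∧ ∃ m₀ : ℕ, ∀ m : ℕ, m₀ ≤ m → ∀ t : ℝ,
      1 - 1 / Real.sqrt m ≤ t → t ≤ 1 - 1 / m →
      (‖ftilde m (Complex.I * (t : ℂ))
          - (1 / (2 * Complex.I)) *
            ((∫ ζ in Set.Ioi ((m : ℝ) * (1 - t)), Real.exp (-ζ) / ζ : ℝ) : ℂ)‖
        ≤ C * Real.log m / m) ∧
      ‖ftilde m (Complex.I * (t : ℂ))‖ ≤ C ∧
      ‖ftilde m (-(Complex.I * (t : ℂ)))‖ ≤ C := by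
  refine ⟨2, two_pos, 3, fun m hm t htl htu => ?_⟩
  have hm3 : (3 : ℝ) ≤ m := by exact_mod_cast hm
  have ht0 : 0 ≤ t := by
    have : 1 / √(m : ℝ) ≤ 1 := by
      rw [div_le_one (by positivity)]
      exact one_le_sqrt.mpr (by linarith)
    linarith
  have hx : 1 ≤ m * (1 - t) := by
    rw [le_sub_iff_add_le, ← le_sub_iff_add_le', div_le_iff₀ (by positivity)] at htu
    linarith
  have ht1 : t < 1 := by nlinarith
  have hmain := abs_integral_pow_div_one_sub_sq_sub_half_expIntegralE₁_le
    (m := m) (n := 2 * ((m - 1) / 2) + 2) (by omega) (by omega) (by omega) ht0 ht1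
  have hE₀ := expIntegralE₁_nonneg (by linarith : 0 ≤ m * (1 - t))
  have hE₁ := expIntegralE₁_le_one hx
  have hm2 : (2 : ℝ) / m ≤ 2 / 3 := by gcongr
  have hbounded : ‖ftilde m (Complex.I * t)‖ ≤ 2 := by
    rw [norm_ftilde_I_mul, abs_le]
    obtain ⟨h₁, h₂⟩ := abs_le.mp hmain
    constructor <;> linarith
  have hlog : 1 ≤ log m := by
    rw [le_log_iff_exp_le (by linarith)]
    linarith [exp_one_lt_d9]
  refine ⟨?_, hbounded, by rwa [ftilde_neg, norm_neg]⟩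
  rw [norm_ftilde_I_mul_sub]
  calc _ ≤ 2 / (m : ℝ) := hmain
    _ ≤ 2 * log m / m := by gcongr; linarith
end

section
/- One has (−1/π) ∫_{−1}^{1} [((1+λ)/2)·ln((1+λ)/2) + ((1−λ)/2)·ln((1−λ)/2)] / √(1−λ²) dλ = 2 ln 2 − 1. -/
/-!
Substituting `λ = cos θ` turns the integral into `-∫₀^π h((1 + cos θ)/2) dθ`, with `h` the
binary entropy, and `θ = 2x` turns `(1 ± cos θ)/2` into `cos² x` and `sin² x`. By the symmetry
`x ↦ π/2 - x` and `sin² x = (1 - cos 2x)/2`, everything reduces to the classical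
`∫₀^{π/2} log sin = -(π/2) log 2` and to `∫₀^{π/2} cos 2x log sin x = -π/4`.
-/

open MeasureTheory Real Set intervalIntegral

theorem integral_cos_two_mul_mul_log_sin :
    ∫ x in 0..π / 2, cos (2 * x) * log (sin x) = -(π / 4) := by
  -- integration by parts against `(sin x cos x)' = cos 2x`, leaving `-∫ cos² x`
  set G : ℝ → ℝ := fun x => cos x * (sin x * log (sin x)) - (x + sin x * cos x) / 2
  have hG : Continuous G := by
    have := continuous_mul_log.comp continuous_sin
    fun_prop
  have hG' : ∀ x ∈ Ioo 0 (π / 2), HasDerivAt G (cos (2 * x) * log (sin x)) x := by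
    intro x hx
    have hsin : sin x ≠ 0 := (sin_pos_of_pos_of_lt_pi hx.1 (by linarith [hx.2, pi_pos])).ne'
    have := ((hasDerivAt_cos x).mul ((hasDerivAt_sin x).mul ((hasDerivAt_sin x).log hsin))).sub
      (((hasDerivAt_id x).add ((hasDerivAt_sin x).mul (hasDerivAt_cos x))).div_const 2)
    refine this.congr_deriv ?_
    simp only [Pi.mul_apply]
    field_simp
    rw [cos_two_mul, cos_sq']
    ring
  have hlog : IntervalIntegrable (fun x => log (sin x)) volume 0 (π / 2) :=
    intervalIntegrable_log_sin
  rw [integral_eq_sub_of_hasDerivAt_of_le (by positivity) hG.continuousOn hG'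
    (hlog.continuousOn_mul (by fun_prop))]
  norm_num [G, div_div]

theorem integral_sin_sq_mul_log_sin :
    ∫ x in 0..π / 2, sin x ^ 2 * log (sin x) = (1 - 2 * log 2) * π / 8 := by
  have hlog : IntervalIntegrable (fun x => log (sin x)) volume 0 (π / 2) :=
    intervalIntegrable_log_sin
  have h : ∀ x, sin x ^ 2 * log (sin x) = log (sin x) / 2 - cos (2 * x) * log (sin x) / 2 := by
    intro x
    rw [sin_sq_eq_half_sub]
    ring
  simp_rw [h]
  rw [integral_sub (hlog.div_const 2) ((hlog.continuousOn_mul (by fun_prop)).div_const 2),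
    intervalIntegral.integral_div, intervalIntegral.integral_div, integral_log_sin_zero_pi_div_two,
    integral_cos_two_mul_mul_log_sin]
  ring

theorem integral_cos_sq_mul_log_cos :
    ∫ x in 0..π / 2, cos x ^ 2 * log (cos x) = (1 - 2 * log 2) * π / 8 := by
  have := integral_comp_sub_left (fun x => sin x ^ 2 * log (sin x)) (a := 0) (b := π / 2) (π / 2)
  simpa [sin_pi_div_two_sub, integral_sin_sq_mul_log_sin] using this

theorem integral_Ioo_div_sqrt_one_sub_sq (f : ℝ → ℝ) :
    ∫ x in Ioo (-1) 1, f x / √(1 - x ^ 2) = ∫ θ in 0..π, f (cos θ) := by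
  have hcos : cos '' Ioo 0 π = Ioo (-1) 1 := cosPartialHomeomorph.image_source_eq_target
  rw [← hcos, integral_image_eq_integral_abs_deriv_smul measurableSet_Ioo
      (fun θ _ => (hasDerivAt_cos θ).hasDerivWithinAt) (injOn_cos.mono Ioo_subset_Icc_self),
    integral_of_le pi_pos.le, integral_Ioc_eq_integral_Ioo]
  refine setIntegral_congr_fun measurableSet_Ioo fun θ hθ => ?_
  have hsin : sin θ ≠ 0 := (sin_pos_of_pos_of_lt_pi hθ.1 hθ.2).ne'
  rw [← sin_sq, sqrt_sq_eq_abs, abs_neg, smul_eq_mul]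
  field_simp

theorem binEntropy_cos_sq (x : ℝ) :
    binEntropy (cos x ^ 2) = -2 * (cos x ^ 2 * log (cos x) + sin x ^ 2 * log (sin x)) := by
  rw [binEntropy_eq_negMulLog_add_negMulLog_one_sub, ← sin_sq]
  simp only [negMulLog, log_pow]
  push_cast
  ring

theorem binEntropy_one_add_div_two (x : ℝ) :
    binEntropy ((1 + x) / 2) =
      -((1 + x) / 2 * log ((1 + x) / 2) + (1 - x) / 2 * log ((1 - x) / 2)) := by
  rw [binEntropy_eq_negMulLog_add_negMulLog_one_sub, show 1 - (1 + x) / 2 = (1 - x) / 2 by ring]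
  simp only [negMulLog]
  ring

theorem integral_binEntropy_one_add_cos_div_two :
    ∫ θ in 0..π, binEntropy ((1 + cos θ) / 2) = (2 * log 2 - 1) * π := by
  have h : ∀ x, binEntropy ((1 + cos (2 * x)) / 2) =
      -2 * (cos x ^ 2 * log (cos x) + sin x ^ 2 * log (sin x)) := fun x => by
    rw [← binEntropy_cos_sq, cos_sq x]
    ring_nf
  have hsin : IntervalIntegrable (fun x => sin x ^ 2 * log (sin x)) volume 0 (π / 2) :=
    (intervalIntegrable_log_sin).continuousOn_mul (by fun_prop)
  have hcos : IntervalIntegrable (fun x => cos x ^ 2 * log (cos x)) volume 0 (π / 2) :=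
    (intervalIntegrable_log_cos).continuousOn_mul (by fun_prop)
  have := integral_comp_mul_left (fun θ => binEntropy ((1 + cos θ) / 2)) (a := 0) (b := π / 2)
    two_ne_zero
  rw [mul_zero, mul_div_cancel₀ _ two_ne_zero, smul_eq_mul] at this
  have hhalf :
      ∫ x in 0..π / 2, binEntropy ((1 + cos (2 * x)) / 2) = (2 * log 2 - 1) * π / 2 := by
    simp only [h]
    rw [intervalIntegral.integral_const_mul, integral_add hcos hsin, integral_cos_sq_mul_log_cos,
      integral_sin_sq_mul_log_sin]
    ring
  linarith

/-- `(−1/π) ∫_{−1}^{1} [((1+λ)/2)·ln((1+λ)/2) + ((1−λ)/2)·ln((1−λ)/2)] / √(1−λ²) dλ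
       = 2 ln 2 − 1`. -/
theorem entropy_integral_value :
    (-1 / Real.pi) *
        ∫ lam in Set.Ioo (-1 : ℝ) 1,
          (((1 + lam) / 2) * Real.log ((1 + lam) / 2)
            + ((1 - lam) / 2) * Real.log ((1 - lam) / 2)) / Real.sqrt (1 - lam ^ 2)
      = 2 * Real.log 2 - 1 := by
  simp_rw [← fun x => neg_eq_iff_eq_neg.mpr (binEntropy_one_add_div_two x), neg_div]
  rw [MeasureTheory.integral_neg,
    integral_Ioo_div_sqrt_one_sub_sq (fun x => binEntropy ((1 + x) / 2)),
    integral_binEntropy_one_add_cos_div_two]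
  field_simp
end

section
/- Let m ∈ ℕ with m ≥ 1, set M = ⌊(m−1)/2⌋, and let z ∈ ℂ with Re z ≠ 0. Then Σ_{ℓ=1}^{m} (sin(ℓπ/2)/ℓ)·z^ℓ = Σ_{k=0}^{M} (−1)^k z^{2k+1}/(2k+1) = (1/(2i))·Log((z−i)/(z+i)) + (π/2)·sgn(Re z) + (−1)^M ∫₀^z y^{2M+2}/(1+y²) dy, where the integral is taken along the straight segment from 0 to z (which avoids ±i since Re z ≠ 0), Log is the principal branch of the complex logarithm (note (z−i)/(z+i) ∉ (−∞,0] since z ∉ [−i,i]), and sgn(Re z) = 1 if Re z > 0 and −1 if Re z < 0. -/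
/-!
Since `sin (ℓπ/2)` vanishes for even `ℓ` and equals `(-1)^k` for `ℓ = 2k+1`, the left-hand side
is the Taylor polynomial of `arctan` of degree `2M+1`. Writing
`z^(2k+1)/(2k+1) = z ∫₀¹ (tz)^(2k) dt` and summing the geometric series in `-(tz)²` splits it
as `∫₀¹ z/(1+(tz)²) dt` plus the stated remainder. The first integral is `arctan z`: along the
segment, `(1+itz)/(1-itz)` has nonzero imaginary part (or equals `1`), so it stays in the slit
plane where `Log` is holomorphic. Finally `(1+iz)/(1-iz) = -(z-i)/(z+i)`, and
`Im ((z-i)/(z+i))` has the sign of `-Re z`, so passing from `Log (-w)` to `Log w` shifts the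
argument by `±π`, which produces `(π/2)·sgn (Re z)`.
-/

open Finset

theorem Finset.sum_Icc_one_eq_sum_range_odd {M : Type*} [AddCommMonoid M] (f : ℕ → M)
    (hf : ∀ k, f (2 * (k + 1)) = 0) (m : ℕ) :
    ∑ ℓ ∈ Icc 1 m, f ℓ = ∑ k ∈ range ((m + 1) / 2), f (2 * k + 1) := by
  induction m using Nat.twoStepInduction with
  | zero => simp
  | one => simp
  | more m ih _ =>
    rw [sum_Icc_succ_top (by omega), sum_Icc_succ_top (by omega), ih,
      show (m + 2 + 1) / 2 = (m + 1) / 2 + 1 by omega, sum_range_succ, add_assoc]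
    obtain ⟨j, rfl | rfl⟩ := Nat.even_or_odd' m
    · rw [show 2 * j + 2 = 2 * (j + 1) by ring, hf, add_zero,
        show (2 * j + 1) / 2 = j by omega]
    · rw [show 2 * j + 1 + 1 = 2 * (j + 1) by ring, hf, zero_add,
        Nat.mul_div_cancel_left _ two_pos]

theorem Real.sin_two_mul_nat_mul_pi_div_two (k : ℕ) : Real.sin (2 * k * Real.pi / 2) = 0 := by
  rw [mul_div_right_comm, mul_div_cancel_left₀ _ two_ne_zero, Real.sin_nat_mul_pi]

theorem Real.sin_two_mul_nat_add_one_mul_pi_div_two (k : ℕ) :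
    Real.sin ((2 * k + 1) * Real.pi / 2) = (-1) ^ k := by
  rw [show (2 * k + 1) * Real.pi / 2 = Real.pi / 2 + k * Real.pi by ring,
    Real.sin_add_nat_mul_pi, Real.sin_pi_div_two, mul_one]

theorem sum_sin_mul_pi_div_two_mul_pow (m : ℕ) (hm : 1 ≤ m) (z : ℂ) :
    ∑ ℓ ∈ Icc 1 m, ((Real.sin (ℓ * Real.pi / 2) : ℂ) / ℓ) * z ^ ℓ
      = ∑ k ∈ range ((m - 1) / 2 + 1), (-1 : ℂ) ^ k * z ^ (2 * k + 1) / (2 * k + 1) := by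
  rw [sum_Icc_one_eq_sum_range_odd _ (fun k => ?_), show (m + 1) / 2 = (m - 1) / 2 + 1 by omega]
  · refine sum_congr rfl fun k _ => ?_
    simp only [Nat.cast_add, Nat.cast_mul, Nat.cast_ofNat, Nat.cast_one,
      Real.sin_two_mul_nat_add_one_mul_pi_div_two]
    push_cast
    ring
  · simp only [Nat.cast_mul, Nat.cast_ofNat, Real.sin_two_mul_nat_mul_pi_div_two]
    simp

theorem geom_sum_neg_sq {K : Type*} [Field K] {w : K} (hw : 1 + w ^ 2 ≠ 0) (n : ℕ) :
    ∑ k ∈ range (n + 1), (-w ^ 2) ^ k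
      = 1 / (1 + w ^ 2) + (-1) ^ n * (w ^ (2 * n + 2) / (1 + w ^ 2)) := by
  have hw' : -w ^ 2 ≠ 1 := fun h => hw (by linear_combination -h)
  rw [geom_sum_eq hw', neg_pow, ← pow_mul]
  field_simp
  ring

namespace Complex

theorem one_add_mul_I_div_one_sub_mul_I_mem_slitPlane {w : ℂ} (hw : w.re ≠ 0 ∨ w = 0) :
    (1 + w * I) / (1 - w * I) ∈ slitPlane := by
  rcases hw with hw | rfl
  · have hden : 1 - w * I ≠ 0 := fun h => hw (by simpa using congrArg im h)
    refine mem_slitPlane_iff.mpr (Or.inr ?_)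
    have him : ((1 + w * I) / (1 - w * I)).im = 2 * w.re / normSq (1 - w * I) := by
      simp only [div_im, add_im, one_im, mul_im, I_im, mul_one, I_re, mul_zero, add_zero,
        zero_add, sub_re, one_re, mul_re, zero_sub, sub_neg_eq_add, add_re, sub_im, mul_neg]
      ring
    rw [him]
    exact div_ne_zero (mul_ne_zero two_ne_zero hw) (normSq_pos.mpr hden).ne'
  · simp

theorem one_add_sq_eq_mul (w : ℂ) : 1 + w ^ 2 = (1 + w * I) * (1 - w * I) := by
  linear_combination w ^ 2 * I_sq

theorem one_add_sq_ne_zero_of_mem_slitPlane {w : ℂ}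
    (hw : (1 + w * I) / (1 - w * I) ∈ slitPlane) : 1 + w ^ 2 ≠ 0 := by
  rw [one_add_sq_eq_mul]
  intro h
  apply slitPlane_ne_zero hw
  rcases mul_eq_zero.mp h with h | h <;> simp [h]

theorem hasDerivAt_arctan {w : ℂ} (hw : (1 + w * I) / (1 - w * I) ∈ slitPlane) :
    HasDerivAt arctan (1 / (1 + w ^ 2)) w := by
  have hne := one_add_sq_ne_zero_of_mem_slitPlane hw
  rw [one_add_sq_eq_mul] at hne ⊢
  have hden : 1 - w * I ≠ 0 := right_ne_zero_of_mul hne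
  have hquot : HasDerivAt (fun w => (1 + w * I) / (1 - w * I)) (2 * I / (1 - w * I) ^ 2) w := by
    refine ((((hasDerivAt_id w).mul_const I).const_add 1).fun_div
      (((hasDerivAt_id w).mul_const I).const_sub 1) hden).congr_deriv ?_
    simp only [one_mul, id_eq]
    ring
  refine ((hquot.clog hw).const_mul (-I / 2)).congr_deriv ?_
  field_simp
  rw [I_sq]
  ring

theorem ofReal_mul_mem_slitPlane {z : ℂ} (hz : z.re ≠ 0) (t : ℝ) :
    (1 + t * z * I) / (1 - t * z * I) ∈ slitPlane := by
  refine one_add_mul_I_div_one_sub_mul_I_mem_slitPlane ?_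
  rcases eq_or_ne t 0 with rfl | ht
  · simp
  · simp [ht, hz]

theorem continuous_div_one_add_ofReal_mul_sq {f : ℝ → ℂ} (hf : Continuous f) {z : ℂ}
    (hz : z.re ≠ 0) : Continuous fun t : ℝ => f t / (1 + (t * z) ^ 2) :=
  hf.div (by fun_prop)
    fun t => one_add_sq_ne_zero_of_mem_slitPlane (ofReal_mul_mem_slitPlane hz t)

theorem integral_div_one_add_ofReal_mul_sq {z : ℂ} (hz : z.re ≠ 0) :
    ∫ t in (0 : ℝ)..1, z / (1 + (t * z) ^ 2) = arctan z := by
  have hderiv (t : ℝ) : HasDerivAt (fun t : ℝ => arctan (t * z)) (z / (1 + (t * z) ^ 2)) t := by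
    have := ((hasDerivAt_arctan (ofReal_mul_mem_slitPlane hz t)).comp (t : ℂ)
      ((hasDerivAt_id (t : ℂ)).mul_const z)).comp_ofReal
    simpa [div_eq_inv_mul] using this
  have hcont : Continuous fun t : ℝ => z / (1 + (t * z) ^ 2) :=
    continuous_div_one_add_ofReal_mul_sq continuous_const hz
  rw [intervalIntegral.integral_eq_sub_of_hasDerivAt (fun t _ => hderiv t)
    (hcont.intervalIntegrable 0 1)]
  simp [arctan]

theorem arctan_eq_log_div_add {z : ℂ} (hz : z.re ≠ 0) :
    arctan z = 1 / (2 * I) * log ((z - I) / (z + I))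
      + (Real.pi / 2 : ℂ) * (if 0 < z.re then 1 else -1) := by
  set w := (z - I) / (z + I)
  have hzI : z + I ≠ 0 := fun h => hz (by simpa using congrArg re h)
  have hzI' : 1 - z * I ≠ 0 := fun h => hzI (by linear_combination I * h + z * I_sq)
  have hratio : (1 + z * I) / (1 - z * I) = -w := by
    rw [neg_div', div_eq_div_iff hzI' hzI]
    linear_combination 2 * z * I_sq
  have him : w.im = -2 * z.re / normSq (z + I) := by
    simp only [w, div_im, sub_im, I_im, add_re, I_re, add_zero, sub_re, sub_zero, add_im, neg_mul]
    ring
  have hlog : log (-w) = log w + (arg (-w) - arg w) * I := by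
    simp only [log, norm_neg]
    ring
  have hinv : 1 / (2 * I) = -I / 2 := by
    field_simp
    linear_combination I_sq
  rw [arctan, hratio, hlog, hinv]
  rcases hz.lt_or_gt with hneg | hpos
  · rw [arg_neg_eq_arg_sub_pi_of_im_pos, if_neg hneg.not_gt]
    · push_cast
      linear_combination (Real.pi / 2 : ℂ) * I_sq
    · rw [him]
      exact div_pos (by linarith) (normSq_pos.mpr hzI)
  · rw [arg_neg_eq_arg_add_pi_of_im_neg, if_pos hpos]
    · push_cast
      linear_combination -(Real.pi / 2 : ℂ) * I_sq
    · rw [him]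
      exact div_neg_of_neg_of_pos (by linarith) (normSq_pos.mpr hzI)

theorem integral_ofReal_pow (n : ℕ) : ∫ t in (0 : ℝ)..1, (t : ℂ) ^ n = 1 / (n + 1) := by
  simp [← ofReal_pow, intervalIntegral.integral_ofReal, integral_pow]

theorem sum_arctan_series_eq_integral (n : ℕ) (z : ℂ) :
    ∑ k ∈ range (n + 1), (-1 : ℂ) ^ k * z ^ (2 * k + 1) / (2 * k + 1)
      = ∫ t in (0 : ℝ)..1, z * ∑ k ∈ range (n + 1), (-(t * z) ^ 2) ^ k := by
  simp_rw [mul_sum]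
  rw [intervalIntegral.integral_finsetSum
    fun k _ => (by fun_prop : Continuous _).intervalIntegrable 0 1]
  refine sum_congr rfl fun k _ => ?_
  have hterm : (fun t : ℝ => z * (-((t : ℂ) * z) ^ 2) ^ k)
      = fun t : ℝ => (-1) ^ k * z ^ (2 * k + 1) * (t : ℂ) ^ (2 * k) := by
    funext t
    ring
  rw [hterm, intervalIntegral.integral_const_mul, integral_ofReal_pow]
  push_cast
  ring

theorem sum_arctan_series_eq_arctan_add_integral (n : ℕ) {z : ℂ} (hz : z.re ≠ 0) :
    ∑ k ∈ range (n + 1), (-1 : ℂ) ^ k * z ^ (2 * k + 1) / (2 * k + 1)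
      = arctan z + (-1 : ℂ) ^ n * z *
          ∫ t in (0 : ℝ)..1, ((t : ℂ) * z) ^ (2 * n + 2) / (1 + ((t : ℂ) * z) ^ 2) := by
  have hgeom (t : ℝ) : z * ∑ k ∈ range (n + 1), (-(t * z) ^ 2) ^ k
      = z / (1 + (t * z) ^ 2) + (-1) ^ n * z * ((t * z) ^ (2 * n + 2) / (1 + (t * z) ^ 2)) := by
    rw [geom_sum_neg_sq (one_add_sq_ne_zero_of_mem_slitPlane (ofReal_mul_mem_slitPlane hz t))]
    ring
  have hmain : Continuous fun t : ℝ => z / (1 + (t * z) ^ 2) :=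
    continuous_div_one_add_ofReal_mul_sq continuous_const hz
  have hrem : Continuous fun t : ℝ => ((t : ℂ) * z) ^ (2 * n + 2) / (1 + (t * z) ^ 2) :=
    continuous_div_one_add_ofReal_mul_sq (by fun_prop) hz
  simp_rw [sum_arctan_series_eq_integral, hgeom]
  rw [intervalIntegral.integral_add (hmain.intervalIntegrable 0 1)
    ((hrem.intervalIntegrable 0 1).const_mul _), intervalIntegral.integral_const_mul,
    integral_div_one_add_ofReal_mul_sq hz]

end Complex

/-- for `m ≥ 1`, `M = ⌊(m−1)/2⌋` and `z ∈ ℂ` with `Re z ≠ 0`,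
    `Σ_{ℓ=1}^{m} (sin(ℓπ/2)/ℓ)·z^ℓ = Σ_{k=0}^{M} (−1)^k z^{2k+1}/(2k+1)
      = (1/(2i))·Log((z−i)/(z+i)) + (π/2)·sgn(Re z)
        + (−1)^M ∫₀^z y^{2M+2}/(1+y²) dy`,
    the last integral being taken along the straight segment from `0` to `z`
    (parametrised by `y = tz`, `t ∈ [0,1]`). -/
theorem fm_decomposition (m : ℕ) (hm : 1 ≤ m) (z : ℂ) (hz : z.re ≠ 0) :
    (∑ ℓ ∈ Finset.Icc 1 m, ((Real.sin (ℓ * Real.pi / 2) : ℂ) / ℓ) * z ^ ℓ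
      = ∑ k ∈ Finset.range ((m - 1) / 2 + 1),
          (-1 : ℂ) ^ k * z ^ (2 * k + 1) / (2 * k + 1)) ∧
    (∑ k ∈ Finset.range ((m - 1) / 2 + 1),
        (-1 : ℂ) ^ k * z ^ (2 * k + 1) / (2 * k + 1)
      = (1 / (2 * Complex.I)) * Complex.log ((z - Complex.I) / (z + Complex.I))
        + ((Real.pi : ℂ) / 2) * (if 0 < z.re then 1 else -1)
        + (-1 : ℂ) ^ ((m - 1) / 2) * z *
            ∫ t in (0 : ℝ)..1,
              ((t : ℂ) * z) ^ (2 * ((m - 1) / 2) + 2) / (1 + ((t : ℂ) * z) ^ 2)) := by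
  refine ⟨sum_sin_mul_pi_div_two_mul_pow m hm z, ?_⟩
  rw [Complex.sum_arctan_series_eq_arctan_add_integral _ hz, Complex.arctan_eq_log_div_add hz]
end
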